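/- arXiv:1011.2873 — 2 statements merged into one kernel-verified Lean document; each statement's English description precedes it below -/
import Mathlib

section
/- Let $n \ge 2$ be even. Consider the set of positive roots $\alpha_{ab}$, $1 \le a < b \le n+1$, of $\mathfrak{su}(n+1)$, where in coordinates $\alpha_{ab} = e_a - e_b \in \mathbb{R}^{n+1}$ (standard basis vectors). Then there exists a choice of signs $\epsilon_{ab} \in \{+1, -1\}$ such that $\sum_{1 \le a < b \le n+1} \epsilon_{ab}\, \alpha_{ab} = 0$. -/
/-!
Take `ε_{ab} = (-1)^(a+b)`. The `c`-th coordinate of `∑_{a<b} ε_{ab} (e_a - e_b)` is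
`(-1)^c (∑_{b>c} (-1)^b - ∑_{a<c} (-1)^a)`. Since `n + 1` is odd, the full alternating sum
`∑_{i ≤ n} (-1)^i` is `1`, and so is `∑_{i<c} (-1)^i + ∑_{i≤c} (-1)^i` (exactly one of `c`, `c + 1`
is even); hence the alternating sums below and above `c` agree.
-/

open Finset

theorem sum_positive_roots_smul_apply {ι R : Type*} [Fintype ι] [LinearOrder ι] [Ring R]
    (ε : ι → ι → R) (c : ι) :
    (∑ a, ∑ b, if a < b then ε a b • (Pi.single a 1 - Pi.single b 1 : ι → R) else 0) c =
      ∑ b with c < b, ε c b - ∑ a with a < c, ε a c := by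
  have term_apply : ∀ a b,
      (if a < b then ε a b • (Pi.single a 1 - Pi.single b 1 : ι → R) else 0) c =
        (if a = c then (if c < b then ε c b else 0) else 0) -
          (if b = c then (if a < c then ε a c else 0) else 0) := by
    intro a b
    split_ifs <;> simp_all [Pi.single_apply, eq_comm]
  simp only [Finset.sum_apply, term_apply, sum_sub_distrib,
    sum_comm (γ := ι) (f := fun a b => if b = c then _ else _)]
  simp only [sum_ite_irrel, sum_const_zero, sum_ite_eq', mem_univ, if_true, sum_filter]

theorem sum_Ioo_neg_one_pow_eq_sum_range {R : Type*} [Ring R] {m c : ℕ} (hm : Odd m)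
    (hc : c < m) : ∑ i ∈ Ioo c m, (-1 : R) ^ i = ∑ i ∈ range c, (-1 : R) ^ i := by
  rw [← Ico_add_one_left_eq_Ioo, sum_Ico_eq_sub _ (show c + 1 ≤ m from hc),
    neg_one_geom_sum, neg_one_geom_sum, neg_one_geom_sum, if_neg (Nat.not_even_iff_odd.2 hm)]
  by_cases hc : Even c <;> simp [Nat.even_add_one, hc]

theorem Fin.sum_Ioi_neg_one_pow_eq_sum_Iio {R : Type*} [Ring R] {m : ℕ} (hm : Odd m)
    (c : Fin m) : ∑ i ∈ Ioi c, (-1 : R) ^ (i : ℕ) = ∑ i ∈ Iio c, (-1 : R) ^ (i : ℕ) := by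
  have sum_Ioi : ∑ i ∈ Ioi c, (-1 : R) ^ (i : ℕ) = ∑ i ∈ Ioo (c : ℕ) m, (-1) ^ i := by
    rw [← Fin.map_valEmbedding_Ioi, sum_map]; rfl
  have sum_Iio : ∑ i ∈ Iio c, (-1 : R) ^ (i : ℕ) = ∑ i ∈ range c, (-1) ^ i := by
    rw [← Nat.Iio_eq_range, ← Fin.map_valEmbedding_Iio, sum_map]; rfl
  rw [sum_Ioi, sum_Iio, sum_Ioo_neg_one_pow_eq_sum_range hm c.isLt]

theorem exists_signs_summing_roots_to_zero_of_even_general (n : ℕ)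
    (heven : Even n) :
    ∃ ε : Fin (n + 1) → Fin (n + 1) → ℝ,
      (∀ a b : Fin (n + 1), ε a b = 1 ∨ ε a b = -1) ∧
      (∑ a : Fin (n + 1), ∑ b : Fin (n + 1),
        if a < b then
          ε a b • ((Pi.single a 1 - Pi.single b 1 : Fin (n + 1) → ℝ)) else 0) = 0 := by
  refine ⟨fun a b => (-1 : ℝ) ^ ((a : ℕ) + b), fun a b => neg_one_pow_eq_or ℝ _, ?_⟩
  funext c
  rw [sum_positive_roots_smul_apply, Pi.zero_apply, sub_eq_zero]
  simp only [pow_add, ← mul_sum, ← sum_mul, filter_lt_eq_Ioi, filter_gt_eq_Iio]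
  rw [mul_comm, Fin.sum_Ioi_neg_one_pow_eq_sum_Iio heven.add_one]

/-- for even `n ≥ 2`, there is a choice of signs
`ε_{ab} ∈ {±1}` such that `∑_{1 ≤ a < b ≤ n+1} ε_{ab} (e_a - e_b) = 0`
for the positive roots `α_{ab} = e_a - e_b` of `su(n+1)` in `ℝ^{n+1}`. -/
theorem exists_signs_summing_roots_to_zero_of_even (n : ℕ) (hn : 2 ≤ n)
    (heven : Even n) :
    ∃ ε : Fin (n + 1) → Fin (n + 1) → ℝ,
      (∀ a b : Fin (n + 1), ε a b = 1 ∨ ε a b = -1) ∧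
      (∑ a : Fin (n + 1), ∑ b : Fin (n + 1),
        if a < b then
          ε a b • ((Pi.single a 1 - Pi.single b 1 : Fin (n + 1) → ℝ)) else 0) = 0 :=
  exists_signs_summing_roots_to_zero_of_even_general n heven
end

section
/- Let $\mathfrak{g} = \mathfrak{k} \oplus \mathfrak{m}$ be a reductive decomposition with $[\mathfrak{k},\mathfrak{k}] \subset \mathfrak{k}$ a proper subalgebra of lower rank, realized via a common root space decomposition: $\mathfrak{m} \otimes \mathbb{C} = \mathrm{span}\{H_1,\dots,H_p\} \oplus \bigoplus_{\alpha \in R^+\setminus S^+}(\mathfrak{g}_\alpha \oplus \mathfrak{g}_{-\alpha})$, where the roots in $R^+ \setminus S^+$ are all higher than those in $S^+$ in a chosen ordering. Define $\mathfrak{m}^+ \subset (\mathfrak{m}\oplus\mathbb{R}^p)\otimes\mathbb{C}$ as the span of the root vectors $E_\alpha$, $\alpha \in R^+\setminus S^+$, together with $E_j = H_j - i\partial_j$, and $\mathfrak{m}^-$ as the span of $E_{-\alpha}$ and $\overline{E}_j = H_j + i\partial_j$. Then $[\mathfrak{k}, \mathfrak{m}^+] \subset \mathfrak{m}^+$, $[\mathfrak{k},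 \mathfrak{m}^-] \subset \mathfrak{m}^-$, $[\mathfrak{m}^+, \mathfrak{m}^+] \subset \mathfrak{m}^+$, and $[\mathfrak{m}^-, \mathfrak{m}^-] \subset \mathfrak{m}^-$ (brackets taken modulo $\mathfrak{k}\otimes\mathbb{C}$ where appropriate, with $\mathbb{R}^p$ central). -/
/-!
By bilinearity it suffices to bracket generators. Each generator of `k`, `m⁺`, `m⁻` is a Cartan
element (up to a central `∂`-component) or a root vector `E γ`. Cartan elements commute and act
diagonally on root vectors, and `[E γ, E δ]` is a multiple of `E (γ + δ)` or zero. For the pairs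
occurring in `[k, m⁺]` and `[m⁺, m⁺]` the height of `γ + δ` is positive, because the roots of
`R \ S` are higher than those of `S`; so `γ + δ ≠ 0`, and if it is a root it lies in `R`, whence
`E (γ + δ) ∈ m⁺ ⊕ k`. The claims for `m⁻` are those for `m⁺` with respect to the opposite
ordering `(-R, -S, -f)`.
-/

open Submodule

section

variable {K L V ι : Type*} [CommRing K] [LieRing L] [LieAlgebra K L] [AddCommGroup V] [Module K V]

theorem lie_fst_mem_of_mem_span {s t : Set (L × V)} {T : Submodule K (L × V)}
    (h : ∀ x ∈ s, ∀ y ∈ t, ((⁅x.1, y.1⁆, 0) : L × V) ∈ T) {x y : L × V}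
    (hx : x ∈ span K s) (hy : y ∈ span K t) : ((⁅x.1, y.1⁆, 0) : L × V) ∈ T := by
  let B : (L × V) →ₗ[K] (L × V) →ₗ[K] (L × V) :=
    LinearMap.mk₂ K (fun x y => (⁅x.1, y.1⁆, 0))
      (fun _ _ _ => by simp [add_lie]) (fun _ _ _ => by simp [smul_lie])
      (fun _ _ _ => by simp [lie_add]) (fun _ _ _ => by simp [lie_smul])
  have hB : map₂ B (span K s) (span K t) ≤ T := by
    rw [map₂_span_span, span_le]
    rintro _ ⟨x, hx, y, hy, rfl⟩
    exact h x hx y hy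
  exact map₂_le.1 hB x hx y hy

/-- The second coordinate of a Cartan element is left arbitrary: the bracket ignores it. -/
def cartanRootSet (H : ι → L) (E : (ι → K) → L) (A : Set (ι → K)) : Set (L × V) :=
  {x | (∃ j, x.1 = H j) ∨ ∃ γ ∈ A, x = (E γ, 0)}

structure RootVectorRelations (H : ι → L) (E : (ι → K) → L) (Φ : Set (ι → K)) : Prop where
  lie_cartan_cartan : ∀ i j, ⁅H i, H j⁆ = 0
  lie_cartan_rootVector : ∀ α ∈ Φ, ∀ j, ⁅H j, E α⁆ = α j • E α
  lie_rootVector_of_add_mem : ∀ α ∈ Φ, ∀ β ∈ Φ, α + β ∈ Φ → ∃ c : K, ⁅E α, E β⁆ = c • E (α + β)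
  lie_rootVector_of_add_notMem : ∀ α ∈ Φ, ∀ β ∈ Φ, α + β ∉ Φ → α + β ≠ 0 → ⁅E α, E β⁆ = 0

namespace RootVectorRelations

variable {H : ι → L} {E : (ι → K) → L}

theorem neg {R : Set (ι → K)} (hrel : RootVectorRelations H E (R ∪ -R)) :
    RootVectorRelations H E (-R ∪ -(-R)) := by
  rwa [neg_neg, Set.union_comm]

theorem lie_fst_mem {Φ A B : Set (ι → K)} (hrel : RootVectorRelations H E Φ)
    {T : Submodule K (L × V)}
    (hA : ∀ γ ∈ A, γ ∈ Φ ∧ ((E γ, 0) : L × V) ∈ T) (hB : ∀ δ ∈ B, δ ∈ Φ ∧ ((E δ, 0) : L × V) ∈ T)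
    (hAB : ∀ γ ∈ A, ∀ δ ∈ B, γ + δ ≠ 0 ∧ (γ + δ ∈ Φ → ((E (γ + δ), 0) : L × V) ∈ T))
    {x y : L × V} (hx : x ∈ span K (cartanRootSet H E A))
    (hy : y ∈ span K (cartanRootSet H E B)) : ((⁅x.1, y.1⁆, 0) : L × V) ∈ T := by
  refine lie_fst_mem_of_mem_span ?_ hx hy
  rintro x (⟨i, hi⟩ | ⟨γ, hγ, rfl⟩) y (⟨j, hj⟩ | ⟨δ, hδ, rfl⟩)
  · rw [hi, hj, hrel.lie_cartan_cartan]
    exact T.zero_mem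
  · rw [hi, hrel.lie_cartan_rootVector δ (hB δ hδ).1 i]
    simpa using T.smul_mem (δ i) (hB δ hδ).2
  · rw [hj, ← lie_skew, hrel.lie_cartan_rootVector γ (hA γ hγ).1 j]
    simpa using T.smul_mem (-γ j) (hA γ hγ).2
  · obtain ⟨hne, hmem⟩ := hAB γ hγ δ hδ
    by_cases hroot : γ + δ ∈ Φ
    · obtain ⟨c, hc⟩ := hrel.lie_rootVector_of_add_mem γ (hA γ hγ).1 δ (hB δ hδ).1 hroot
      simpa [hc] using T.smul_mem c (hmem hroot)
    · rw [hrel.lie_rootVector_of_add_notMem γ (hA γ hγ).1 δ (hB δ hδ).1 hroot hne]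
      exact T.zero_mem

end RootVectorRelations

structure IsSeparatingHeight {Λ : Type*} [AddCommGroup Λ] (φ : Λ →+ ℝ) (R S : Set Λ) : Prop where
  subset : S ⊆ R
  pos : ∀ α ∈ R, 0 < φ α
  lt : ∀ α ∈ R \ S, ∀ β ∈ S, φ β < φ α

namespace IsSeparatingHeight

variable {Λ : Type*} [AddCommGroup Λ] {φ : Λ →+ ℝ} {R S : Set Λ}

theorem neg (h : IsSeparatingHeight φ R S) : IsSeparatingHeight (-φ) (-R) (-S) where
  subset := Set.neg_subset_neg.2 h.subset
  pos α hα := by simpa using h.pos (-α) hα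
  lt α hα β hβ := by simpa using h.lt (-α) hα (-β) hβ

theorem mem_of_pos (h : IsSeparatingHeight φ R S) {ζ : Λ} (hζ : ζ ∈ R ∪ -R) (hpos : 0 < φ ζ) :
    ζ ∈ R := by
  refine hζ.resolve_right fun hneg => ?_
  have := h.pos (-ζ) hneg
  rw [map_neg] at this
  linarith

theorem add_pos_of_mem_levi (h : IsSeparatingHeight φ R S) {γ δ : Λ} (hγ : γ ∈ S ∪ -S)
    (hδ : δ ∈ R \ S) : 0 < φ (γ + δ) := by
  rw [map_add]
  rcases hγ with hγ | hγ
  · exact add_pos (h.pos γ (h.subset hγ)) (h.pos δ hδ.1)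
  · have := h.lt δ hδ (-γ) hγ
    rw [map_neg] at this
    linarith

end IsSeparatingHeight

namespace RootVectorRelations

variable {H : ι → L} {E : (ι → K) → L} {R S : Set (ι → K)} {φ : (ι → K) →+ ℝ}

theorem lie_fst_mem_of_isSeparatingHeight (hrel : RootVectorRelations H E (R ∪ -R))
    (hφ : IsSeparatingHeight φ R S) {k m : Submodule K (L × V)}
    (hk : k ≤ span K (cartanRootSet H E (S ∪ -S))) (hm : m ≤ span K (cartanRootSet H E (R \ S)))
    (hkE : ∀ γ ∈ S ∪ -S, ((E γ, 0) : L × V) ∈ k) (hmE : ∀ γ ∈ R \ S, ((E γ, 0) : L × V) ∈ m) :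
    (∀ x ∈ k, ∀ y ∈ m, ((⁅x.1, y.1⁆, 0) : L × V) ∈ m ⊔ k) ∧
      (∀ x ∈ m, ∀ y ∈ m, ((⁅x.1, y.1⁆, 0) : L × V) ∈ m ⊔ k) := by
  have hR : ∀ ζ ∈ R, ((E ζ, 0) : L × V) ∈ m ⊔ k := fun ζ hζ =>
    (em (ζ ∈ S)).elim (fun hζS => mem_sup_right (hkE ζ (Or.inl hζS)))
      (fun hζS => mem_sup_left (hmE ζ ⟨hζ, hζS⟩))
  have hsum : ∀ ζ, 0 < φ ζ → ζ ≠ 0 ∧ (ζ ∈ R ∪ -R → ((E ζ, 0) : L × V) ∈ m ⊔ k) :=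
    fun ζ hζ => ⟨fun h0 => by simp [h0] at hζ, fun hΦ => hR ζ (hφ.mem_of_pos hΦ hζ)⟩
  have hkΦ : ∀ γ ∈ S ∪ -S, γ ∈ R ∪ -R ∧ ((E γ, 0) : L × V) ∈ m ⊔ k := fun γ hγ =>
    ⟨Set.union_subset_union hφ.subset (Set.neg_subset_neg.2 hφ.subset) hγ,
      mem_sup_right (hkE γ hγ)⟩
  have hmΦ : ∀ γ ∈ R \ S, γ ∈ R ∪ -R ∧ ((E γ, 0) : L × V) ∈ m ⊔ k := fun γ hγ =>
    ⟨Or.inl hγ.1, mem_sup_left (hmE γ hγ)⟩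
  refine ⟨fun x hx y hy => hrel.lie_fst_mem hkΦ hmΦ ?_ (hk hx) (hm hy),
    fun x hx y hy => hrel.lie_fst_mem hmΦ hmΦ ?_ (hm hx) (hm hy)⟩
  · exact fun γ hγ δ hδ => hsum _ (hφ.add_pos_of_mem_levi hγ hδ)
  · exact fun γ hγ δ hδ => hsum _ <| by
      rw [map_add]
      exact add_pos (hφ.pos γ hγ.1) (hφ.pos δ hδ.1)

end RootVectorRelations

end

theorem coset_complex_structure_bracket_closure_general
    (r p : ℕ) (hp : p ≤ r)
    {L : Type*} [LieRing L] [LieAlgebra ℂ L]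
    (H : Fin r → L)
    (R S : Finset (Fin r → ℂ)) (hS : S ⊆ R)
    (E : (Fin r → ℂ) → L) (N : (Fin r → ℂ) → (Fin r → ℂ) → ℂ)
    -- root space relations
    (hHE : ∀ α : Fin r → ℂ, (α ∈ R ∨ -α ∈ R) → ∀ j, ⁅H j, E α⁆ = α j • E α)
    (hHH : ∀ i j, ⁅H i, H j⁆ = 0)
    (hEEroot : ∀ α β : Fin r → ℂ, (α ∈ R ∨ -α ∈ R) → (β ∈ R ∨ -β ∈ R) →
      (α + β ∈ R ∨ -(α + β) ∈ R) → ⁅E α, E β⁆ = N α β • E (α + β))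
    (hEEzero : ∀ α β : Fin r → ℂ, (α ∈ R ∨ -α ∈ R) → (β ∈ R ∨ -β ∈ R) →
      ¬(α + β ∈ R ∨ -(α + β) ∈ R) → α + β ≠ 0 → ⁅E α, E β⁆ = 0)
    -- the ordering: roots in R ∖ S are higher than those in S
    (f : (Fin r → ℂ) → ℝ)
    (hfadd : ∀ x y, f (x + y) = f x + f y)
    (hfpos : ∀ α ∈ R, 0 < f α)
    (hhigher : ∀ α ∈ R, α ∉ S → ∀ β ∈ S, f β < f α) :
    -- the subalgebra k ⊗ ℂ (inside L × ℂ^p with central second factor)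
    ∀ k' mp mm : Submodule ℂ (L × (Fin p → ℂ)),
    k' = Submodule.span ℂ
        ({x | ∃ j : Fin r, p ≤ (j : ℕ) ∧ x = (H j, 0)}
          ∪ {x | ∃ α ∈ S, x = (E α, (0 : Fin p → ℂ)) ∨ x = (E (-α), 0)}) →
    mp = Submodule.span ℂ
        ({x | ∃ α ∈ R, α ∉ S ∧ x = (E α, (0 : Fin p → ℂ))}
          ∪ {x | ∃ j : Fin p, x = (H (Fin.castLE hp j), -Complex.I • (Pi.single j 1 : Fin p → ℂ))}) →
    mm = Submodule.span ℂ
        ({x | ∃ α ∈ R, α ∉ S ∧ x = (E (-α), (0 : Fin p → ℂ))}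
          ∪ {x | ∃ j : Fin p, x = (H (Fin.castLE hp j), Complex.I • (Pi.single j 1 : Fin p → ℂ))}) →
    ∀ Br : (L × (Fin p → ℂ)) → (L × (Fin p → ℂ)) → L × (Fin p → ℂ),
    (Br = fun x y => (⁅x.1, y.1⁆, 0)) →
      (∀ x ∈ k', ∀ y ∈ mp, Br x y ∈ mp ⊔ k') ∧
      (∀ x ∈ k', ∀ y ∈ mm, Br x y ∈ mm ⊔ k') ∧
      (∀ x ∈ mp, ∀ y ∈ mp, Br x y ∈ mp ⊔ k') ∧
      (∀ x ∈ mm, ∀ y ∈ mm, Br x y ∈ mm ⊔ k') := by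
  intro k' mp mm hk hmp hmm Br hBr
  subst hBr
  have hrel : RootVectorRelations H E (↑R ∪ -↑R) :=
    ⟨hHH, hHE, fun α hα β hβ h => ⟨N α β, hEEroot α β hα hβ h⟩,
      fun α hα β hβ => hEEzero α β hα hβ⟩
  have hφ : IsSeparatingHeight (AddMonoidHom.mk' f hfadd) ↑R ↑S :=
    ⟨hS, hfpos, fun α hα β hβ => hhigher α hα.1 hα.2 β hβ⟩
  have hk_le : k' ≤ span ℂ (cartanRootSet H E (↑S ∪ -↑S)) := hk ▸ span_mono (by
    rintro x (⟨j, -, rfl⟩ | ⟨α, hα, rfl | rfl⟩)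
    exacts [Or.inl ⟨j, rfl⟩, Or.inr ⟨α, Or.inl hα, rfl⟩, Or.inr ⟨-α, Or.inr (by simpa), rfl⟩])
  have hmp_le : mp ≤ span ℂ (cartanRootSet H E (↑R \ ↑S)) := hmp ▸ span_mono (by
    rintro x (⟨α, hα, hαS, rfl⟩ | ⟨j, rfl⟩)
    exacts [Or.inr ⟨α, ⟨hα, hαS⟩, rfl⟩, Or.inl ⟨_, rfl⟩])
  have hmm_le : mm ≤ span ℂ (cartanRootSet H E (-↑R \ -↑S)) := hmm ▸ span_mono (by
    rintro x (⟨α, hα, hαS, rfl⟩ | ⟨j, rfl⟩)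
    exacts [Or.inr ⟨-α, ⟨by simpa, by simpa⟩, rfl⟩, Or.inl ⟨_, rfl⟩])
  have hk_mem : ∀ γ ∈ (↑S ∪ -↑S : Set (Fin r → ℂ)), ((E γ, 0) : L × (Fin p → ℂ)) ∈ k' := by
    rintro γ (hγ | hγ) <;> rw [hk] <;> apply subset_span
    exacts [Or.inr ⟨γ, hγ, Or.inl rfl⟩, Or.inr ⟨-γ, hγ, Or.inr (by rw [neg_neg])⟩]
  have hlevi : -(↑S : Set (Fin r → ℂ)) ∪ -(-↑S) = ↑S ∪ -↑S := by rw [neg_neg, Set.union_comm]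
  obtain ⟨hk_mp, hmp_mp⟩ := hrel.lie_fst_mem_of_isSeparatingHeight hφ hk_le hmp_le hk_mem
    fun γ hγ => hmp ▸ subset_span (Or.inl ⟨γ, hγ.1, hγ.2, rfl⟩)
  obtain ⟨hk_mm, hmm_mm⟩ := hrel.neg.lie_fst_mem_of_isSeparatingHeight hφ.neg (hlevi ▸ hk_le)
    hmm_le (hlevi ▸ hk_mem) fun γ hγ => hmm ▸ subset_span (Or.inl ⟨-γ, hγ.1, hγ.2, by rw [neg_neg]⟩)
  exact ⟨hk_mp, hk_mm, hmp_mp, hmm_mm⟩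

/-- Let `g` be a (compact simple, complexified) Lie algebra with
Cartan elements `H_1, …, H_r`, positive roots `R`, root vectors `E_α`, and a
subalgebra `k` of lower rank spanned by `H_{p+1}, …, H_r` and the root spaces of
`S ⊆ R`, such that the roots in `R ∖ S` are all higher than those in `S` for an
additive positive height function.  Extend by a central `ℂ^p` (the `∂_j`
directions, bracket `Br (x,u) (y,v) = (⁅x,y⁆, 0)`), and let `mp` be the span of
the `E_α` (`α ∈ R∖S`) together with `E_j = H_j - i ∂_j`, and `mm` the span of
the `E_{-α}` and `H_j + i ∂_j`.  Then `[k, mp] ⊂ mp`, `[k, mm] ⊂ mm`,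
`[mp, mp] ⊂ mp` and `[mm, mm] ⊂ mm`, with brackets taken modulo `k ⊗ ℂ`
(i.e. inside `m^± ⊔ k`). -/
theorem coset_complex_structure_bracket_closure
    (r p : ℕ) (hp : p ≤ r) (hp1 : 1 ≤ p)
    {L : Type*} [LieRing L] [LieAlgebra ℂ L]
    (H : Fin r → L)
    (R S : Finset (Fin r → ℂ)) (hS : S ⊆ R) (h0 : (0 : Fin r → ℂ) ∉ R)
    (E : (Fin r → ℂ) → L) (N : (Fin r → ℂ) → (Fin r → ℂ) → ℂ)
    -- root space relations
    (hHE : ∀ α : Fin r → ℂ, (α ∈ R ∨ -α ∈ R) → ∀ j, ⁅H j, E α⁆ = α j • E α)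
    (hHH : ∀ i j, ⁅H i, H j⁆ = 0)
    (hEEroot : ∀ α β : Fin r → ℂ, (α ∈ R ∨ -α ∈ R) → (β ∈ R ∨ -β ∈ R) →
      (α + β ∈ R ∨ -(α + β) ∈ R) → ⁅E α, E β⁆ = N α β • E (α + β))
    (hEEcartan : ∀ α : Fin r → ℂ, (α ∈ R ∨ -α ∈ R) →
      ⁅E α, E (-α)⁆ = ∑ j, (2 * α j) • H j)
    (hEEzero : ∀ α β : Fin r → ℂ, (α ∈ R ∨ -α ∈ R) → (β ∈ R ∨ -β ∈ R) →
      ¬(α + β ∈ R ∨ -(α + β) ∈ R) → α + β ≠ 0 → ⁅E α, E β⁆ = 0)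
    -- the ordering: roots in R ∖ S are higher than those in S
    (f : (Fin r → ℂ) → ℝ)
    (hfadd : ∀ x y, f (x + y) = f x + f y)
    (hfpos : ∀ α ∈ R, 0 < f α)
    (hhigher : ∀ α ∈ R, α ∉ S → ∀ β ∈ S, f β < f α) :
    -- the subalgebra k ⊗ ℂ (inside L × ℂ^p with central second factor)
    ∀ k' mp mm : Submodule ℂ (L × (Fin p → ℂ)),
    k' = Submodule.span ℂ
        ({x | ∃ j : Fin r, p ≤ (j : ℕ) ∧ x = (H j, 0)}
          ∪ {x | ∃ α ∈ S, x = (E α, (0 : Fin p → ℂ)) ∨ x = (E (-α), 0)}) →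
    mp = Submodule.span ℂ
        ({x | ∃ α ∈ R, α ∉ S ∧ x = (E α, (0 : Fin p → ℂ))}
          ∪ {x | ∃ j : Fin p, x = (H (Fin.castLE hp j), -Complex.I • (Pi.single j 1 : Fin p → ℂ))}) →
    mm = Submodule.span ℂ
        ({x | ∃ α ∈ R, α ∉ S ∧ x = (E (-α), (0 : Fin p → ℂ))}
          ∪ {x | ∃ j : Fin p, x = (H (Fin.castLE hp j), Complex.I • (Pi.single j 1 : Fin p → ℂ))}) →
    ∀ Br : (L × (Fin p → ℂ)) → (L × (Fin p → ℂ)) → L × (Fin p → ℂ),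
    (Br = fun x y => (⁅x.1, y.1⁆, 0)) →
      (∀ x ∈ k', ∀ y ∈ mp, Br x y ∈ mp ⊔ k') ∧
      (∀ x ∈ k', ∀ y ∈ mm, Br x y ∈ mm ⊔ k') ∧
      (∀ x ∈ mp, ∀ y ∈ mp, Br x y ∈ mp ⊔ k') ∧
      (∀ x ∈ mm, ∀ y ∈ mm, Br x y ∈ mm ⊔ k') :=
  coset_complex_structure_bracket_closure_general r p hp H R S hS E N hHE hHH hEEroot hEEzero f
    hfadd hfpos hhigher
end
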